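/- arXiv:1904.00840 — 2 statements merged into one kernel-verified Lean document; each statement's English description precedes it below -/
import Mathlib

section
/- Let X₁, X₂, X₃ be i.i.d. Exp(1) random variables. Then max(X₁, X₂) and min(X₁, X₂) + X₃ have the same distribution. -/
/-!
For `Exp(r)` variables, `max (X₀, X₁) ≤ x` exactly when both are `≤ x`, so by independence
the CDF of the maximum is the square of the exponential CDF. The minimum exceeds `x` exactly
when both variables do, so survival functions multiply and `min (X₀, X₁)` is `Exp(2r)`. It is
independent of `X₂`, so `min (X₀, X₁) + X₂` has law `Exp(2r) ∗ Exp(r)`, whose CDF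
`∫₀ˣ 2r e^{-2ra} (1 - e^{-r(x-a)}) da` works out to `(1 - e^{-rx})²` as well.
-/

open MeasureTheory ProbabilityTheory Real Set

lemma integral_exp_mul_one_sub_exp (r x : ℝ) :
    ∫ a in 0..x, (r + r) * exp (-((r + r) * a)) * (1 - exp (-(r * (x - a)))) =
      (1 - exp (-(r * x))) ^ 2 := by
  have hderiv (a : ℝ) : HasDerivAt
      (fun a ↦ -exp (-((r + r) * a)) - 2 * exp (-(r * x)) * -exp (-(r * a)))
      ((r + r) * exp (-((r + r) * a)) * (1 - exp (-(r * (x - a))))) a := by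
    refine ((hasDerivAt_neg_exp_mul_exp (r := r + r)).sub
      ((hasDerivAt_neg_exp_mul_exp (r := r)).const_mul (2 * exp (-(r * x))))).congr_deriv ?_
    have : exp (-((r + r) * a)) * exp (-(r * (x - a))) = exp (-(r * x)) * exp (-(r * a)) := by
      rw [← exp_add, ← exp_add]; ring_nf
    linear_combination (r + r) * this
  rw [intervalIntegral.integral_eq_sub_of_hasDerivAt (fun a _ ↦ hderiv a)
    ((by fun_prop : Continuous _).intervalIntegrable _ _)]
  have : exp (-((r + r) * x)) = exp (-(r * x)) ^ 2 := by rw [← exp_nat_mul]; ring_nf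
  simp only [mul_zero, neg_zero, exp_zero, this]
  ring

namespace ProbabilityTheory

lemma one_sub_cdf_eq_measureReal_Ioi (ν : Measure ℝ) [IsProbabilityMeasure ν] (x : ℝ) :
    1 - cdf ν x = ν.real (Ioi x) := by
  rw [cdf_eq_real, ← probReal_compl_eq_one_sub measurableSet_Iic, compl_Iic]

lemma cdf_conv (ν ρ : Measure ℝ) [IsProbabilityMeasure ν] [IsProbabilityMeasure ρ] (x : ℝ) :
    cdf (ν ∗ ρ) x = ∫ a, cdf ρ (x - a) ∂ν := by
  have hmono : Antitone fun a ↦ ρ (Iic (x - a)) :=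
    fun a b hab ↦ measure_mono (Iic_subset_Iic.2 (by linarith))
  rw [cdf_eq_real, measureReal_def, ← lintegral_indicator_one measurableSet_Iic,
    Measure.lintegral_conv (measurable_one.indicator measurableSet_Iic)]
  simp only [cdf_eq_real, measureReal_def]
  rw [integral_toReal hmono.measurable.aemeasurable (ae_of_all _ fun _ ↦ measure_lt_top _ _)]
  congr 1
  refine lintegral_congr fun a ↦ ?_
  rw [← lintegral_indicator_one measurableSet_Iic]
  congr 1
  ext y
  simp [indicator, le_sub_iff_add_le']

section Independent

variable {Ω : Type*} [MeasurableSpace Ω] {μ : Measure Ω} [IsProbabilityMeasure μ]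
  {X Y : Ω → ℝ}

lemma IndepFun.cdf_map_max (hXY : IndepFun X Y μ) (hX : Measurable X) (hY : Measurable Y)
    (x : ℝ) :
    cdf (μ.map fun ω ↦ max (X ω) (Y ω)) x = cdf (μ.map X) x * cdf (μ.map Y) x := by
  have : IsProbabilityMeasure (μ.map X) := Measure.isProbabilityMeasure_map hX.aemeasurable
  have : IsProbabilityMeasure (μ.map Y) := Measure.isProbabilityMeasure_map hY.aemeasurable
  have : IsProbabilityMeasure (μ.map fun ω ↦ max (X ω) (Y ω)) :=
    Measure.isProbabilityMeasure_map (hX.max hY).aemeasurable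
  have hpre : (fun ω ↦ max (X ω) (Y ω)) ⁻¹' Iic x = X ⁻¹' Iic x ∩ Y ⁻¹' Iic x := by
    ext ω; simp
  simp only [cdf_eq_real, map_measureReal_apply (hX.max hY) measurableSet_Iic,
    map_measureReal_apply hX measurableSet_Iic, map_measureReal_apply hY measurableSet_Iic, hpre,
    measureReal_def, hXY.measure_inter_preimage_eq_mul _ _ measurableSet_Iic measurableSet_Iic,
    ENNReal.toReal_mul]

lemma IndepFun.one_sub_cdf_map_min (hXY : IndepFun X Y μ) (hX : Measurable X)
    (hY : Measurable Y) (x : ℝ) :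
    1 - cdf (μ.map fun ω ↦ min (X ω) (Y ω)) x =
      (1 - cdf (μ.map X) x) * (1 - cdf (μ.map Y) x) := by
  have : IsProbabilityMeasure (μ.map X) := Measure.isProbabilityMeasure_map hX.aemeasurable
  have : IsProbabilityMeasure (μ.map Y) := Measure.isProbabilityMeasure_map hY.aemeasurable
  have : IsProbabilityMeasure (μ.map fun ω ↦ min (X ω) (Y ω)) :=
    Measure.isProbabilityMeasure_map (hX.min hY).aemeasurable
  have hpre : (fun ω ↦ min (X ω) (Y ω)) ⁻¹' Ioi x = X ⁻¹' Ioi x ∩ Y ⁻¹' Ioi x := by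
    ext ω; simp
  simp only [one_sub_cdf_eq_measureReal_Ioi, map_measureReal_apply (hX.min hY) measurableSet_Ioi,
    map_measureReal_apply hX measurableSet_Ioi, map_measureReal_apply hY measurableSet_Ioi, hpre,
    measureReal_def, hXY.measure_inter_preimage_eq_mul _ _ measurableSet_Ioi measurableSet_Ioi,
    ENNReal.toReal_mul]

lemma IndepFun.map_min_eq_expMeasure {r s : ℝ} (hXY : IndepFun X Y μ) (hX : Measurable X)
    (hY : Measurable Y) (hr : 0 < r) (hs : 0 < s) (hXr : μ.map X = expMeasure r)
    (hYs : μ.map Y = expMeasure s) :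
    μ.map (fun ω ↦ min (X ω) (Y ω)) = expMeasure (r + s) := by
  have : IsProbabilityMeasure (μ.map fun ω ↦ min (X ω) (Y ω)) :=
    Measure.isProbabilityMeasure_map (hX.min hY).aemeasurable
  have := isProbabilityMeasure_expMeasure (add_pos hr hs)
  refine Measure.eq_of_cdf _ _ (StieltjesFunction.ext fun x ↦ ?_)
  have h := hXY.one_sub_cdf_map_min hX hY x
  rw [hXr, hYs, cdf_expMeasure_eq hr, cdf_expMeasure_eq hs] at h
  rw [cdf_expMeasure_eq (add_pos hr hs)]
  split_ifs at h ⊢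
  · rw [add_mul, neg_add, exp_add]
    linear_combination -h
  · linear_combination -h

end Independent

lemma exponentialPDFReal_eq (r x : ℝ) :
    exponentialPDFReal r x = if 0 ≤ x then r * exp (-(r * x)) else 0 := by
  simp only [exponentialPDFReal, gammaPDFReal, rpow_one, Gamma_one, div_one, sub_self, rpow_zero,
    mul_one]

lemma integral_expMeasure_eq_integral_smul {E : Type*} [NormedAddCommGroup E] [NormedSpace ℝ E]
    {r : ℝ} (hr : 0 < r) (f : ℝ → E) :
    ∫ x, f x ∂expMeasure r = ∫ x, exponentialPDFReal r x • f x := by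
  change ∫ x, f x ∂volume.withDensity (fun x ↦ ENNReal.ofReal (exponentialPDFReal r x)) = _
  rw [integral_withDensity_eq_integral_toReal_smul
    (measurable_exponentialPDFReal r).ennreal_ofReal (ae_of_all _ fun _ ↦ ENNReal.ofReal_lt_top)]
  simp only [ENNReal.toReal_ofReal (exponentialPDFReal_nonneg hr _)]

lemma cdf_expMeasure_add_self_conv {r : ℝ} (hr : 0 < r) (x : ℝ) :
    cdf (expMeasure (r + r) ∗ expMeasure r) x = cdf (expMeasure r) x ^ 2 := by
  have := isProbabilityMeasure_expMeasure hr
  have := isProbabilityMeasure_expMeasure (add_pos hr hr)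
  rw [cdf_conv, integral_expMeasure_eq_integral_smul (add_pos hr hr)]
  simp only [smul_eq_mul, exponentialPDFReal_eq, cdf_expMeasure_eq hr]
  have hsupp (a : ℝ) (ha : a ∉ Icc 0 x) :
      (if 0 ≤ a then (r + r) * exp (-((r + r) * a)) else 0) *
        (if 0 ≤ x - a then 1 - exp (-(r * (x - a))) else 0) = 0 := by
    rw [mem_Icc, not_and_or, not_le, not_le] at ha
    rcases ha with ha | ha
    · rw [if_neg ha.not_ge, zero_mul]
    · rw [if_neg (show ¬ 0 ≤ x - a by linarith), mul_zero]
  rw [← setIntegral_eq_integral_of_forall_compl_eq_zero hsupp]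
  by_cases hx : 0 ≤ x
  · rw [integral_Icc_eq_integral_Ioc, ← intervalIntegral.integral_of_le hx, if_pos hx,
      ← integral_exp_mul_one_sub_exp]
    refine intervalIntegral.integral_congr fun a ha ↦ ?_
    rw [uIcc_of_le hx, mem_Icc] at ha
    simp only [if_pos ha.1, if_pos (sub_nonneg.2 ha.2)]
  · rw [Icc_eq_empty hx, Measure.restrict_empty, integral_zero_measure, if_neg hx,
      zero_pow two_ne_zero]

end ProbabilityTheory

/-- Milošević–Obradović characterization, forward direction: for i.i.d. Exp(1) variables
`X 0, X 1, X 2`, `max (X 0, X 1)` and `min (X 0, X 1) + X 2` have the same distribution. -/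
theorem milosevic_obradovic_forward {Ω : Type*} [MeasurableSpace Ω] (μ : Measure Ω)
    [IsProbabilityMeasure μ]
    (X : Fin 3 → Ω → ℝ) (hX : ∀ i, Measurable (X i))
    (hind : iIndepFun X μ)
    (hexp : ∀ i, μ.map (X i) = expMeasure 1) :
    μ.map (fun ω => max (X 0 ω) (X 1 ω)) =
      μ.map (fun ω => min (X 0 ω) (X 1 ω) + X 2 ω) := by
  have h01 : IndepFun (X 0) (X 1) μ := hind.indepFun (by decide)
  have hmin2 : IndepFun (fun ω ↦ min (X 0 ω) (X 1 ω)) (X 2) μ :=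
    (hind.indepFun_prodMk hX 0 1 2 (by decide) (by decide)).comp
      (measurable_fst.min measurable_snd) measurable_id
  have hsum :
      μ.map (fun ω ↦ min (X 0 ω) (X 1 ω) + X 2 ω) = expMeasure (1 + 1) ∗ expMeasure 1 := by
    rw [← h01.map_min_eq_expMeasure (hX 0) (hX 1) one_pos one_pos (hexp 0) (hexp 1), ← hexp 2]
    exact hmin2.map_add_eq_map_conv_map ((hX 0).min (hX 1)) (hX 2)
  have := isProbabilityMeasure_expMeasure one_pos
  have := isProbabilityMeasure_expMeasure (add_pos one_pos one_pos)
  have : IsProbabilityMeasure (μ.map fun ω ↦ max (X 0 ω) (X 1 ω)) :=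
    Measure.isProbabilityMeasure_map ((hX 0).max (hX 1)).aemeasurable
  rw [hsum]
  refine Measure.eq_of_cdf _ _ (StieltjesFunction.ext fun x ↦ ?_)
  rw [h01.cdf_map_max (hX 0) (hX 1), hexp 0, hexp 1, cdf_expMeasure_add_self_conv one_pos, sq]
end

section
/- Let X₁, ..., X_k be i.i.d. Exp(1) random variables. Then max(X₁, ..., X_k) and X₁ + X₂/2 + ⋯ + X_k/k have the same distribution. -/
/-! Both laws have CDF `(1 - e^{-x})^k` on `x ≥ 0`. For the maximum this is independence. For the
sum, `X_j / j` is `Exp(j)`, and convolving the CDF `(1 - e^{-x})^k` with `Exp(k + 1)` gives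
`(1 - e^{-x})^(k + 1)`: on `0 ≤ y ≤ x` the integrand `(k + 1) e^{-(k + 1) y} (1 - e^{y - x})^k`
equals `(k + 1) e^{-y} (e^{-y} - e^{-x})^k`, the derivative of `-(e^{-y} - e^{-x})^(k + 1)`. -/

open MeasureTheory ProbabilityTheory Real Set

noncomputable section

/-- For `k = 0` this is the CDF of `dirac 0`, the law of the empty sum. -/
def expMaxCDF (k : ℕ) (x : ℝ) : ℝ := if 0 ≤ x then (1 - exp (-x)) ^ k else 0

lemma cdf_expMeasure_one_pow {k : ℕ} (hk : k ≠ 0) (x : ℝ) :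
    cdf (expMeasure 1) x ^ k = expMaxCDF k x := by
  rw [cdf_expMeasure_eq one_pos, expMaxCDF, one_mul]
  split_ifs <;> simp [hk]

lemma expMeasure_map_div_const {r c : ℝ} (hr : 0 < r) (hc : 0 < c) :
    (expMeasure r).map (· / c) = expMeasure (r * c) := by
  have := isProbabilityMeasure_expMeasure hr
  have := isProbabilityMeasure_expMeasure (mul_pos hr hc)
  refine Measure.ext_of_Iic _ _ fun x => ?_
  have hpre : (· / c) ⁻¹' Iic x = Iic (x * c) := by
    ext y
    simp [div_le_iff₀ hc]
  rw [Measure.map_apply (measurable_div_const c) measurableSet_Iic, hpre, ← ofReal_cdf,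
    ← ofReal_cdf, cdf_expMeasure_eq hr, cdf_expMeasure_eq (mul_pos hr hc)]
  simp only [mul_nonneg_iff_of_pos_right hc, show r * (x * c) = r * c * x by ring]

lemma MeasureTheory.Measure.conv_Iic (ν ρ : Measure ℝ) [SFinite ν] [SFinite ρ] (x : ℝ) :
    (ν ∗ ρ) (Iic x) = ∫⁻ y, ν (Iic (x - y)) ∂ρ := by
  rw [Measure.conv, Measure.map_apply measurable_add measurableSet_Iic,
    Measure.prod_apply_symm (measurable_add measurableSet_Iic)]
  congr 1 with y
  congr 1 with t
  simp [le_sub_iff_add_le]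

lemma integral_mul_exp_neg_mul_pow_sub_exp_neg (k : ℕ) (x : ℝ) :
    ∫ y in 0..x, (k + 1) * exp (-y) * (exp (-y) - exp (-x)) ^ k = (1 - exp (-x)) ^ (k + 1) := by
  have hderiv : ∀ y, HasDerivAt (fun y => -(exp (-y) - exp (-x)) ^ (k + 1))
      ((k + 1) * exp (-y) * (exp (-y) - exp (-x)) ^ k) y := by
    intro y
    refine (((hasDerivAt_neg y).exp.sub_const _).fun_pow (k + 1)).fun_neg.congr_deriv ?_
    push_cast
    ring
  rw [intervalIntegral.integral_eq_sub_of_hasDerivAt (fun y _ => hderiv y)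
    (by apply Continuous.intervalIntegrable; fun_prop)]
  simp

lemma exp_mul_expMaxCDF_sub (k : ℕ) {x y : ℝ} (hxy : y ≤ x) :
    exp (-((k + 1) * y)) * expMaxCDF k (x - y) = exp (-y) * (exp (-y) - exp (-x)) ^ k := by
  rw [expMaxCDF, if_pos (sub_nonneg.mpr hxy)]
  have : exp (-y) - exp (-x) = exp (-y) * (1 - exp (-(x - y))) := by
    rw [mul_sub, ← exp_add, mul_one, show -y + -(x - y) = -x by ring]
  rw [this, mul_pow, ← exp_nat_mul, ← mul_assoc, ← exp_add]
  congr 2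
  ring

lemma lintegral_expMaxCDF_sub_expMeasure (k : ℕ) (x : ℝ) :
    ∫⁻ y, ENNReal.ofReal (expMaxCDF k (x - y)) ∂expMeasure (k + 1) =
      ENNReal.ofReal (expMaxCDF (k + 1) x) := by
  set φ : ℝ → ℝ := fun y => (k + 1) * exp (-y) * (exp (-y) - exp (-x)) ^ k
  have hφ : ∀ y, exponentialPDF (k + 1) y * ENNReal.ofReal (expMaxCDF k (x - y)) =
      (Icc 0 x).indicator (fun y => ENNReal.ofReal (φ y)) y := by
    intro y
    rcases lt_or_ge y 0 with hy | hy
    · simp [exponentialPDF_of_neg hy, hy.not_ge]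
    rcases le_or_gt y x with hyx | hyx
    · rw [indicator_of_mem (show y ∈ Icc 0 x from ⟨hy, hyx⟩), exponentialPDF_of_nonneg hy,
        ← ENNReal.ofReal_mul (by positivity), mul_assoc, exp_mul_expMaxCDF_sub k hyx,
        ← mul_assoc]
    · simp [expMaxCDF, hyx.not_ge]
  have hpdf : Measurable (exponentialPDF (k + 1)) :=
    (measurable_exponentialPDFReal _).ennreal_ofReal
  have hcdf : Measurable fun y => ENNReal.ofReal (expMaxCDF k (x - y)) := by
    unfold expMaxCDF
    refine ENNReal.measurable_ofReal.comp (Measurable.ite ?_ (by fun_prop) measurable_const)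
    exact measurableSet_le measurable_const (by fun_prop)
  rw [show expMeasure (k + 1) = volume.withDensity (exponentialPDF (k + 1)) from rfl,
    lintegral_withDensity_eq_lintegral_mul _ hpdf hcdf]
  simp only [Pi.mul_apply, hφ, lintegral_indicator measurableSet_Icc]
  rcases le_or_gt 0 x with hx | hx
  · have hφ_nonneg : 0 ≤ᵐ[volume.restrict (Icc 0 x)] φ := by
      filter_upwards [ae_restrict_mem measurableSet_Icc] with y hy
      have : 0 ≤ exp (-y) - exp (-x) := sub_nonneg.mpr (exp_le_exp.mpr (neg_le_neg hy.2))
      simp only [Pi.zero_apply, φ]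
      positivity
    rw [← ofReal_integral_eq_lintegral_ofReal (by fun_prop : Continuous φ).integrableOn_Icc
      hφ_nonneg, integral_Icc_eq_integral_Ioc, ← intervalIntegral.integral_of_le hx,
      integral_mul_exp_neg_mul_pow_sub_exp_neg, expMaxCDF, if_pos hx]
  · simp [expMaxCDF, hx.not_ge]

variable {Ω : Type*} [MeasurableSpace Ω] {μ : Measure Ω}

lemma map_sup'_Iic {ι : Type*} [Fintype ι] (hne : (Finset.univ : Finset ι).Nonempty)
    {X : ι → Ω → ℝ} (hX : ∀ i, Measurable (X i)) (hind : iIndepFun X μ) (x : ℝ) :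
    μ.map (fun ω => Finset.univ.sup' hne fun i => X i ω) (Iic x) =
      ∏ i, μ.map (X i) (Iic x) := by
  have hmeas : Measurable fun ω => Finset.univ.sup' hne fun i => X i ω := by
    simpa only [← Finset.sup'_apply] using Finset.measurable_sup' hne fun i _ => hX i
  have hpre : (fun ω => Finset.univ.sup' hne fun i => X i ω) ⁻¹' Iic x =
      ⋂ i, X i ⁻¹' Iic x := by
    ext ω
    simp
  rw [Measure.map_apply hmeas measurableSet_Iic, hpre,
    hind.meas_iInter fun i => ⟨Iic x, measurableSet_Iic, rfl⟩]
  simp only [Measure.map_apply (hX _) measurableSet_Iic]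

lemma map_sum_expMeasure_Iic [IsProbabilityMeasure μ] {k : ℕ} {X : Fin k → Ω → ℝ}
    (hX : ∀ i, Measurable (X i)) (hind : iIndepFun X μ)
    (hexp : ∀ i, μ.map (X i) = expMeasure ((i : ℕ) + 1)) (x : ℝ) :
    μ.map (∑ i, X i) (Iic x) = ENNReal.ofReal (expMaxCDF k x) := by
  induction k generalizing x with
  | zero =>
    rw [Finset.univ_eq_empty, Finset.sum_empty, Pi.zero_def, Measure.map_const, measure_univ,
      one_smul, Measure.dirac_apply' _ measurableSet_Iic]
    by_cases hx : 0 ≤ x <;> simp [expMaxCDF, hx]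
  | succ k ih =>
    have hindep : IndepFun (∑ i : Fin k, X i.castSucc) (X (Fin.last k)) μ := by
      simpa [Finset.sum_map] using
        hind.indepFun_finsetSum_of_notMem hX (s := Finset.univ.map Fin.castSuccEmb)
          (i := Fin.last k) (by simp)
    rw [Fin.sum_univ_castSucc, hindep.map_add_eq_map_conv_map (by fun_prop) (hX _),
      Measure.conv_Iic, hexp, Fin.val_last]
    simp only [ih (fun i => hX _) (hind.precomp (Fin.castSucc_injective k))
      (fun i => by simpa using hexp i.castSucc)]
    exact_mod_cast lintegral_expMaxCDF_sub_expMeasure k x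

end

/-- Arnold–Villasenor characterization, forward direction: for i.i.d. Exp(1) variables
`X 0, …, X (k-1)`, the maximum `max (X 0, …, X (k-1))` and the weighted sum
`∑ j, X j / (j+1)` have the same distribution. -/
theorem arnold_villasenor_forward {Ω : Type*} [MeasurableSpace Ω] (μ : Measure Ω)
    [IsProbabilityMeasure μ] (k : ℕ) (hk : 0 < k)
    (X : Fin k → Ω → ℝ) (hX : ∀ i, Measurable (X i))
    (hind : iIndepFun X μ)
    (hexp : ∀ i, μ.map (X i) = expMeasure 1) :
    μ.map (fun ω => Finset.univ.sup' (Finset.univ_nonempty_iff.mpr ⟨⟨0, hk⟩⟩)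
        (fun i => X i ω)) =
      μ.map (fun ω => ∑ i : Fin k, X i ω / ((i : ℕ) + 1)) := by
  set Y : Fin k → Ω → ℝ := fun i ω => X i ω / ((i : ℕ) + 1)
  have hY : ∀ i, μ.map (Y i) = expMeasure ((i : ℕ) + 1) := fun i => by
    change μ.map ((· / ((i : ℕ) + 1 : ℝ)) ∘ X i) = _
    rw [← Measure.map_map (measurable_div_const _) (hX i), hexp i,
      expMeasure_map_div_const one_pos (by positivity), one_mul]
  have hsum : (fun ω => ∑ i : Fin k, X i ω / ((i : ℕ) + 1)) = ∑ i, Y i := by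
    ext ω
    simp [Y]
  refine Measure.ext_of_Iic _ _ fun x => ?_
  rw [map_sup'_Iic _ hX hind, hsum, map_sum_expMeasure_Iic (fun i => (hX i).div_const _)
    (hind.comp _ fun i => measurable_div_const _) hY]
  have := isProbabilityMeasure_expMeasure one_pos
  simp only [hexp, ← ofReal_cdf, Finset.prod_const, Finset.card_univ, Fintype.card_fin]
  rw [← ENNReal.ofReal_pow (cdf_nonneg _ _), cdf_expMeasure_one_pow hk.ne']
end
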